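/- arXiv:math/9410216 — 5 statements merged into one kernel-verified Lean document; each statement's English description precedes it below -/
import Mathlib

section
/- Let K = ℚ(α) where α⁸ = −15. Then each of the elements (α+1)/(α−1), (α²+α+2)/(α+1), and (α²−α+2)/(−α+1) of K is a unit of the ring of integers 𝓞_K (i.e., each lies in 𝓞_K and its inverse also lies in 𝓞_K). -/
/-!
Each of the three elements is a root of a monic integer octic with constant term `1`, so it is
integral, and so is its inverse: if `p = X * q + 1` then `x⁻¹ = -q(x)`. The octics come from
clearing denominators in `β⁸ + 15 = 0`: for `u = (β + 1) / (β - 1)` one has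
`β = (u + 1) / (u - 1)`, and for `v = (β² + β + 2) / (β + 1)` one has `v + 1 = γ + 2 / γ` with
`γ = β + 1`, so the octic of `v` is the norm of `(γ - 1)⁸ + 15` from `ℚ(γ)` down to `ℚ(v)`.
The third element is `v` taken at the root `-α`.
-/

open Polynomial

theorem isIntegral_and_isIntegral_inv_of_aeval_eq_zero {R A : Type*} [CommRing R] [Field A]
    [Algebra R A] {p : R[X]} (hp : p.Monic) (h0 : IsUnit (p.coeff 0)) {x : A}
    (hx : aeval x p = 0) : IsIntegral R x ∧ IsIntegral R x⁻¹ := by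
  obtain ⟨c, hc⟩ := h0
  have hmul : x * aeval x (-C (↑c⁻¹ : R) * p.divX) = 1 := by
    have h := congrArg (aeval x) p.divX_mul_X_add
    rw [hx, map_add, map_mul, aeval_X, aeval_C, ← hc] at h
    have hinv : algebraMap R A ↑c * algebraMap R A ↑c⁻¹ = 1 := by
      rw [← map_mul, Units.mul_inv, map_one]
    simp only [map_mul, map_neg, aeval_C]
    linear_combination (-algebraMap R A ↑c⁻¹) * h + hinv
  refine ⟨⟨p, hp, hx⟩, ?_⟩
  rw [inv_eq_of_mul_eq_one_right hmul]
  exact adjoin_le_integralClosure ⟨p, hp, hx⟩ (aeval_mem_adjoin_singleton R x)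

noncomputable def octicU : ℤ[X] :=
  X ^ 8 - 7 * X ^ 7 + 28 * X ^ 6 - 49 * X ^ 5 + 70 * X ^ 4 - 49 * X ^ 3 + 28 * X ^ 2 - 7 * X + 1

noncomputable def octicV : ℤ[X] :=
  X ^ 8 - X ^ 7 - 8 * X ^ 6 - 13 * X ^ 5 + 130 * X ^ 4 - 217 * X ^ 3 + 112 * X ^ 2 + 11 * X + 1

theorem octicU_monic : octicU.Monic := by unfold octicU; monicity!

theorem octicV_monic : octicV.Monic := by unfold octicV; monicity!

theorem octicU_coeff_zero : octicU.coeff 0 = 1 := by simp [octicU]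

theorem octicV_coeff_zero : octicV.coeff 0 = 1 := by simp [octicV]

section

variable {K : Type*} [Field K] [NeZero (2 : K)] {β : K}

theorem sub_one_ne_zero_of_pow_eight_eq (hβ : β ^ 8 = -15) : β - 1 ≠ 0 := by
  intro h
  have h16 : (2 : K) ^ 4 = 0 := by
    linear_combination hβ - (β ^ 7 + β ^ 6 + β ^ 5 + β ^ 4 + β ^ 3 + β ^ 2 + β + 1) * h
  exact pow_ne_zero 4 two_ne_zero h16

theorem add_one_ne_zero_of_pow_eight_eq (hβ : β ^ 8 = -15) : β + 1 ≠ 0 := by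
  have := sub_one_ne_zero_of_pow_eight_eq (β := -β) (by linear_combination hβ)
  contrapose! this
  linear_combination -this

theorem aeval_octicU (hβ : β ^ 8 = -15) : aeval ((β + 1) / (β - 1)) octicU = 0 := by
  have := sub_one_ne_zero_of_pow_eight_eq hβ
  simp only [octicU, map_add, map_sub, map_mul, map_pow, aeval_X, map_one, map_ofNat]
  field_simp
  linear_combination 16 * hβ

theorem aeval_octicV (hβ : β ^ 8 = -15) : aeval ((β ^ 2 + β + 2) / (β + 1)) octicV = 0 := by
  have := add_one_ne_zero_of_pow_eight_eq hβ
  simp only [octicV, map_add, map_sub, map_mul, map_pow, aeval_X, map_one, map_ofNat]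
  field_simp
  refine mul_left_cancel₀ (pow_ne_zero 4 (two_ne_zero (α := K))) ?_
  -- the conjugate factor `γ⁸ ((2 / γ - 1)⁸ + 15)` of the norm
  linear_combination ((1 - β) ^ 8 + 15 * (β + 1) ^ 8) * hβ

end

theorem units_of_K_general
    (K : Type*) [Field K] [NumberField K]
    (α : K) (hα : α ^ 8 = -15) :
    (IsIntegral ℤ ((α + 1) / (α - 1)) ∧ IsIntegral ℤ ((α + 1) / (α - 1))⁻¹) ∧
    (IsIntegral ℤ ((α ^ 2 + α + 2) / (α + 1)) ∧
      IsIntegral ℤ ((α ^ 2 + α + 2) / (α + 1))⁻¹) ∧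
    (IsIntegral ℤ ((α ^ 2 - α + 2) / (-α + 1)) ∧
      IsIntegral ℤ ((α ^ 2 - α + 2) / (-α + 1))⁻¹) := by
  have hU : IsUnit (octicU.coeff 0) := octicU_coeff_zero ▸ isUnit_one
  have hV : IsUnit (octicV.coeff 0) := octicV_coeff_zero ▸ isUnit_one
  have hw := aeval_octicV (β := -α) (by linear_combination hα)
  rw [neg_sq, ← sub_eq_add_neg] at hw
  exact ⟨isIntegral_and_isIntegral_inv_of_aeval_eq_zero octicU_monic hU (aeval_octicU hα),
    isIntegral_and_isIntegral_inv_of_aeval_eq_zero octicV_monic hV (aeval_octicV hα),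
    isIntegral_and_isIntegral_inv_of_aeval_eq_zero octicV_monic hV hw⟩

/-- For `K = ℚ(α)` with `α⁸ = -15`, the elements `(α+1)/(α-1)`, `(α²+α+2)/(α+1)` and
`(α²-α+2)/(-α+1)` are units of the ring of integers of `K`: each is integral over `ℤ`
and its inverse is integral over `ℤ`. -/
theorem units_of_K
    (K : Type*) [Field K] [NumberField K]
    (α : K) (hα : α ^ 8 = -15) (hgen : Algebra.adjoin ℚ {α} = ⊤) :
    (IsIntegral ℤ ((α + 1) / (α - 1)) ∧ IsIntegral ℤ ((α + 1) / (α - 1))⁻¹) ∧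
    (IsIntegral ℤ ((α ^ 2 + α + 2) / (α + 1)) ∧
      IsIntegral ℤ ((α ^ 2 + α + 2) / (α + 1))⁻¹) ∧
    (IsIntegral ℤ ((α ^ 2 - α + 2) / (-α + 1)) ∧
      IsIntegral ℤ ((α ^ 2 - α + 2) / (-α + 1))⁻¹) :=
  units_of_K_general K α hα
end

section
/- Let K' = ℚ(β) where β⁸ = −240. Then each of the elements (β⁶ + 2β⁴ − 4β² − 56)/16, (β⁷ − 2β⁶ + 2β⁵ − 4β³ + 8β² − 8β + 64)/64, and (β⁷ − 2β⁵ + 4β⁴ − 4β³ − 32β² + 8β − 16)/64 of K' is a unit of the ring of integers 𝓞_{K'} (i.e., each lies in 𝓞_{K'} and its inverse also lies in 𝓞_{K'}). -/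
/-! Put `θ = β² / 2`, so `θ⁴ = -15`. The elements `ω = (1 + θ²) / 2` and `ζ = (1 + θ) ω / 2` are
algebraic integers, because `ω² = ω - 4`, `θ² = 2ω - 1` and `ζ² = ωζ - 2ω`. Each of the three
given elements `u` has norm `1` down to a subfield (`ℚ(ω)` for the first, `ℚ(θ)` for the other two),
so `u⁻¹` is its conjugate and `u (t - u) = 1`, where the trace `t` lies in `ℤ[θ, ω, ζ]`. Hence `u`,
a root of `X² - tX + 1`, and `u⁻¹ = t - u` are both integral. -/

open Polynomial

theorem isIntegral_ofNat {R A : Type*} [CommRing R] [Ring A] [Algebra R A] (n : ℕ)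
    [n.AtLeastTwo] : IsIntegral R (ofNat(n) : A) :=
  isIntegral_natCast n

theorem IsIntegral.of_sq_eq_mul_add {R A : Type*} [CommRing R] [CommRing A] [Algebra R A]
    {x b c : A} (hb : IsIntegral R b) (hc : IsIntegral R c) (h : x ^ 2 = b * x + c) :
    IsIntegral R x := by
  refine isIntegral_trans (A := integralClosure R A) x
    ⟨X ^ 2 - C ⟨b, hb⟩ * X - C ⟨c, hc⟩, by monicity!, ?_⟩
  simp [h]

theorem isIntegral_and_isIntegral_inv_of_mul_sub_eq_one {R K : Type*} [CommRing R] [Field K]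
    [Algebra R K] {u t : K} (ht : IsIntegral R t) (h : u * (t - u) = 1) :
    IsIntegral R u ∧ IsIntegral R u⁻¹ := by
  have hu : IsIntegral R u := .of_sq_eq_mul_add ht isIntegral_one.neg (by linear_combination -h)
  exact ⟨hu, inv_eq_of_mul_eq_one_right h ▸ ht.sub hu⟩

theorem units_of_K'_general
    (K' : Type*) [Field K'] [NumberField K']
    (β : K') (hβ : β ^ 8 = -240) :
    (IsIntegral ℤ ((β ^ 6 + 2 * β ^ 4 - 4 * β ^ 2 - 56) / 16) ∧
      IsIntegral ℤ ((β ^ 6 + 2 * β ^ 4 - 4 * β ^ 2 - 56) / 16)⁻¹) ∧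
    (IsIntegral ℤ
        ((β ^ 7 - 2 * β ^ 6 + 2 * β ^ 5 - 4 * β ^ 3 + 8 * β ^ 2 - 8 * β + 64) / 64) ∧
      IsIntegral ℤ
        ((β ^ 7 - 2 * β ^ 6 + 2 * β ^ 5 - 4 * β ^ 3 + 8 * β ^ 2 - 8 * β + 64) / 64)⁻¹) ∧
    (IsIntegral ℤ
        ((β ^ 7 - 2 * β ^ 5 + 4 * β ^ 4 - 4 * β ^ 3 - 32 * β ^ 2 + 8 * β - 16) / 64) ∧
      IsIntegral ℤ
        ((β ^ 7 - 2 * β ^ 5 + 4 * β ^ 4 - 4 * β ^ 3 - 32 * β ^ 2 + 8 * β - 16) / 64)⁻¹) := by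
  set θ := β ^ 2 / 2
  set ω := (1 + θ ^ 2) / 2
  set ζ := (1 + θ) * ω / 2
  have hω : IsIntegral ℤ ω :=
    .of_sq_eq_mul_add isIntegral_one (isIntegral_ofNat 4).neg (by linear_combination hβ / 64)
  have hθ : IsIntegral ℤ θ :=
    .of_sq_eq_mul_add isIntegral_zero (((isIntegral_ofNat 2).mul hω).sub isIntegral_one) (by ring)
  have hζ : IsIntegral ℤ ζ :=
    .of_sq_eq_mul_add hω ((isIntegral_ofNat 2).mul hω).neg (by linear_combination ω * hβ / 128)
  refine ⟨?_, ?_, ?_⟩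
  · refine isIntegral_and_isIntegral_inv_of_mul_sub_eq_one
      (((isIntegral_ofNat 2).mul hω).sub (isIntegral_ofNat 8)) ?_
    linear_combination (-β ^ 4 / 256 + 3 / 64) * hβ
  · refine isIntegral_and_isIntegral_inv_of_mul_sub_eq_one
      ((((isIntegral_ofNat 2).add hθ).add hω).sub ((isIntegral_ofNat 2).mul hζ)) ?_
    linear_combination (-β ^ 6 / 4096 + β ^ 2 / 1024) * hβ
  · refine isIntegral_and_isIntegral_inv_of_mul_sub_eq_one
      ((hω.sub ((isIntegral_ofNat 2).mul hθ)).sub isIntegral_one) ?_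
    linear_combination (-β ^ 6 / 4096 + β ^ 4 / 1024 + β ^ 2 / 1024 - 1 / 256) * hβ

/-- For `K' = ℚ(β)` with `β⁸ = -240`, the elements `(β⁶+2β⁴-4β²-56)/16`,
`(β⁷-2β⁶+2β⁵-4β³+8β²-8β+64)/64` and `(β⁷-2β⁵+4β⁴-4β³-32β²+8β-16)/64` are units of the
ring of integers of `K'`: each is integral over `ℤ` and its inverse is integral over `ℤ`. -/
theorem units_of_K'
    (K' : Type*) [Field K'] [NumberField K']
    (β : K') (hβ : β ^ 8 = -240) (hgen : Algebra.adjoin ℚ {β} = ⊤) :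
    (IsIntegral ℤ ((β ^ 6 + 2 * β ^ 4 - 4 * β ^ 2 - 56) / 16) ∧
      IsIntegral ℤ ((β ^ 6 + 2 * β ^ 4 - 4 * β ^ 2 - 56) / 16)⁻¹) ∧
    (IsIntegral ℤ
        ((β ^ 7 - 2 * β ^ 6 + 2 * β ^ 5 - 4 * β ^ 3 + 8 * β ^ 2 - 8 * β + 64) / 64) ∧
      IsIntegral ℤ
        ((β ^ 7 - 2 * β ^ 6 + 2 * β ^ 5 - 4 * β ^ 3 + 8 * β ^ 2 - 8 * β + 64) / 64)⁻¹) ∧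
    (IsIntegral ℤ
        ((β ^ 7 - 2 * β ^ 5 + 4 * β ^ 4 - 4 * β ^ 3 - 32 * β ^ 2 + 8 * β - 16) / 64) ∧
      IsIntegral ℤ
        ((β ^ 7 - 2 * β ^ 5 + 4 * β ^ 4 - 4 * β ^ 3 - 32 * β ^ 2 + 8 * β - 16) / 64)⁻¹) :=
  units_of_K'_general K' β hβ
end

section
/- Let K' = ℚ(β) with β⁸ = −240, let U' = 𝓞_{K'}ˣ, and let U₀' be the subgroup of U' generated by −1, u₁ = (β⁶ + 2β⁴ − 4β² − 56)/16, u₂ = (β⁷ − 2β⁶ + 2β⁵ − 4β³ + 8β² − 8β + 64)/64, and u₃ = (β⁷ − 2β⁵ + 4β⁴ − 4β³ − 32β² + 8β − 16)/64. Then U₀' ∩ (U')² = (U₀')², i.e., every element of U₀' that is the square of a unit of 𝓞_{K'} is the square of an element of U₀'. -/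
/-!
Modulo `(U₀')²`, every element of `U₀'` is a product of a subset of the generators
`-1, u₁, u₂, u₃`, so it suffices that no nonempty such product is a square in `U'`.
For `(p, r) = (19, 8), (23, 9), (31, 2), (47, 16)`, `r` is a simple root of `X⁸ + 240` modulo `p`;
by Hensel's lemma it lifts to a root in `ℤ_p`, which gives an embedding `K' → ℚ_p` and hence a
ring map `𝓞_{K'} → 𝔽_p` sending `β` to `r`. Composed with the Legendre symbol, these give four
characters of `U'` that are trivial on squares, and their values on `-1, u₁, u₂, u₃` form a
matrix that is invertible over `𝔽₂`.
-/

open NumberField Polynomial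

theorem Polynomial.irreducible_X_pow_eight_add_240 : Irreducible (X ^ 8 + 240 : ℚ[X]) := by
  have hmonic : (X ^ 8 + 240 : ℤ[X]).Monic := by monicity!
  have hdeg : (X ^ 8 + 240 : ℤ[X]).natDegree = 8 := by compute_degree!
  have heis : (X ^ 8 + 240 : ℤ[X]).IsEisensteinAt (Ideal.span {3}) := by
    refine ⟨?_, fun {n} hn ↦ ?_, ?_⟩
    · rw [hmonic.leadingCoeff, Ideal.mem_span_singleton]
      norm_num
    · rw [hdeg] at hn
      rw [Ideal.mem_span_singleton]
      rcases n with _ | n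
      · norm_num
      · simp [coeff_X_pow, hn.ne]
    · rw [Ideal.span_singleton_pow, Ideal.mem_span_singleton]
      norm_num
  have hirr := heis.irreducible ((Ideal.span_singleton_prime (by norm_num)).mpr (by norm_num))
    hmonic.isPrimitive (by rw [hdeg]; norm_num)
  simpa using (IsPrimitive.Int.irreducible_iff_irreducible_map_cast hmonic.isPrimitive).mp hirr

theorem Subgroup.closure_range_inter_squares_eq_squares {G ι : Type*} [CommGroup G] [Fintype ι]
    {g : ι → G} (hg : ∀ s : Finset ι, IsSquare (∏ i ∈ s, g i) → s = ∅) :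
    {x | x ∈ closure (Set.range g) ∧ ∃ y, y ^ 2 = x} =
      {x | ∃ y ∈ closure (Set.range g), y ^ 2 = x} := by
  classical
  ext x
  refine ⟨fun ⟨hx, y, hy⟩ ↦ ?_, fun ⟨y, hy, hyx⟩ ↦ ⟨hyx ▸ pow_mem hy 2, y, hyx⟩⟩
  obtain ⟨a, rfl⟩ := exists_of_mem_closure_range g x hx
  set t := ∏ i, g i ^ (a i / 2)
  have hsplit : ∏ i, g i ^ a i = (∏ i ∈ Finset.univ.filter (a · % 2 = 1), g i) * t ^ 2 := by
    rw [Finset.prod_filter, ← Finset.prod_pow, ← Finset.prod_mul_distrib]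
    refine Finset.prod_congr rfl fun i _ ↦ ?_
    rw [← zpow_natCast, ← zpow_mul]
    conv_lhs => rw [← Int.emod_add_mul_ediv (a i) 2]
    rcases Int.emod_two_eq (a i) with h | h <;> simp [h, zpow_add, mul_comm]
  have hodd : Finset.univ.filter (a · % 2 = 1) = ∅ := by
    refine hg _ ?_
    have := (IsSquare.sq y).mul (IsSquare.sq t⁻¹)
    rwa [hy, hsplit, inv_pow, mul_inv_cancel_right] at this
  refine ⟨t, prod_mem fun i _ ↦ zpow_mem (subset_closure (Set.mem_range_self i)) _, ?_⟩
  rw [hsplit, hodd, Finset.prod_empty, one_mul]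

theorem eq_empty_of_isSquare_prod_of_monoidHom_intUnits {G ι κ : Type*} [CommGroup G]
    {g : ι → G} (χ : κ → G →* ℤˣ) (hχ : ∀ s : Finset ι, (∀ k, ∏ i ∈ s, χ k (g i) = 1) → s = ∅)
    (s : Finset ι) (hs : IsSquare (∏ i ∈ s, g i)) : s = ∅ := by
  obtain ⟨y, hy⟩ := hs
  refine hχ s fun k ↦ ?_
  rw [← map_prod, hy, map_mul, Int.units_mul_self]

theorem quadraticChar_map_eq_of_sq_mul_eq {R F : Type*} [CommRing R] [Field F] [Fintype F]
    [DecidableEq F] (ψ : R →+* F) {c x y : R} (hc : ψ c ≠ 0) (h : c ^ 2 * x = y) :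
    quadraticChar F (ψ x) = quadraticChar F (ψ y) := by
  rw [← h, map_mul, map_pow, map_mul, quadraticChar_sq_one' hc, one_mul]

theorem PadicInt.exists_aeval_eq_zero_toZMod_eq {p : ℕ} [Fact p.Prime] {f : ℤ[X]} {r : ℤ}
    (hroot : (p : ℤ) ∣ f.eval r) (hsimple : ¬ (p : ℤ) ∣ f.derivative.eval r) :
    ∃ ζ : ℤ_[p], aeval ζ f = 0 ∧ toZMod ζ = r := by
  have aeval_intCast (g : ℤ[X]) : aeval (r : ℤ_[p]) g = ((g.eval r : ℤ) : ℤ_[p]) := by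
    rw [aeval_def, eval₂_at_intCast, Int.cast_id, eq_intCast]
  have hderiv : ‖aeval (r : ℤ_[p]) (derivative f)‖ = 1 := by
    rw [aeval_intCast]
    exact (norm_le_one _).antisymm (not_lt.mp (mt (norm_int_lt_one_iff_dvd _).mp hsimple))
  have hval : ‖aeval (r : ℤ_[p]) f‖ < ‖aeval (r : ℤ_[p]) (derivative f)‖ ^ 2 := by
    rw [hderiv, one_pow, aeval_intCast]
    exact (norm_int_lt_one_iff_dvd _).mpr hroot
  obtain ⟨ζ, hζ, hclose, -⟩ := hensels_lemma hval
  refine ⟨ζ, hζ, ?_⟩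
  rwa [hderiv, ← mem_nonunits, ← IsLocalRing.mem_maximalIdeal, ← ker_toZMod,
    RingHom.sub_mem_ker_iff, map_intCast] at hclose

theorem PadicInt.norm_le_one_of_isIntegral {p : ℕ} [Fact p.Prime] {x : ℚ_[p]}
    (hx : IsIntegral ℤ x) : ‖x‖ ≤ 1 := by
  obtain ⟨z, rfl⟩ := IsIntegrallyClosed.isIntegral_iff.mp (hx.tower_top (A := ℤ_[p]))
  exact z.norm_le_one

namespace NumberField.RingOfIntegers

variable {K : Type*} [Field K] {p : ℕ} [Fact p.Prime]

noncomputable def toPadicInt (φ : K →+* ℚ_[p]) : 𝓞 K →+* ℤ_[p] where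
  toFun x := ⟨φ x, PadicInt.norm_le_one_of_isIntegral (x.isIntegral_coe.map φ.toIntAlgHom)⟩
  map_one' := PadicInt.ext (by simp)
  map_mul' _ _ := PadicInt.ext (by simp; rfl)
  map_zero' := PadicInt.ext (by simp)
  map_add' _ _ := PadicInt.ext (by simp; rfl)

theorem coe_toPadicInt (φ : K →+* ℚ_[p]) (x : 𝓞 K) : (toPadicInt φ x : ℚ_[p]) = φ x := rfl

theorem exists_ringHom_zmod_apply_eq [NumberField K] {β : K} (hgen : Algebra.adjoin ℚ {β} = ⊤)
    {f : ℤ[X]} (hf : minpoly ℚ β = f.map (algebraMap ℤ ℚ)) {r : ℤ}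
    (hroot : (p : ℤ) ∣ f.eval r) (hsimple : ¬ (p : ℤ) ∣ f.derivative.eval r) :
    ∃ ψ : 𝓞 K →+* ZMod p, ∀ b : 𝓞 K, (b : K) = β → ψ b = r := by
  obtain ⟨ζ, hζ, hζr⟩ := PadicInt.exists_aeval_eq_zero_toZMod_eq hroot hsimple
  have hy : aeval (ζ : ℚ_[p]) (minpoly ℚ β) = 0 := by
    rw [hf, aeval_map_algebraMap, ← PadicInt.algebraMap_apply, aeval_algebraMap_apply, hζ,
      map_zero]
  let pb := PowerBasis.ofAdjoinEqTop (Algebra.IsIntegral.isIntegral β) hgen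
  let φ : K →+* ℚ_[p] := pb.lift _ hy
  refine ⟨PadicInt.toZMod.comp (toPadicInt φ), fun b hb ↦ ?_⟩
  have hbζ : toPadicInt φ b = ζ :=
    PadicInt.ext (by rw [coe_toPadicInt, hb]; exact pb.lift_gen _ hy)
  rw [RingHom.comp_apply, hbζ, hζr]

end NumberField.RingOfIntegers

section

variable {K : Type*} [Field K] [NumberField K] {β : K} (hβ : β ^ 8 = -240)
include hβ

theorem minpoly_eq_of_pow_eight_eq :
    minpoly ℚ β = (X ^ 8 + 240 : ℤ[X]).map (algebraMap ℤ ℚ) := by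
  rw [Polynomial.map_add, Polynomial.map_pow, map_X, Polynomial.map_ofNat]
  refine (minpoly.eq_of_irreducible_of_monic irreducible_X_pow_eight_add_240 ?_ ?_).symm
  · rw [map_add, map_pow, aeval_X, map_ofNat, hβ, neg_add_cancel]
  · monicity!

theorem exists_quadraticChar_units (hgen : Algebra.adjoin ℚ {β} = ⊤) {u₁ u₂ u₃ : (𝓞 K)ˣ}
    (hu₁ : algebraMap (𝓞 K) K u₁.val = (β ^ 6 + 2 * β ^ 4 - 4 * β ^ 2 - 56) / 16)
    (hu₂ : algebraMap (𝓞 K) K u₂.val =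
      (β ^ 7 - 2 * β ^ 6 + 2 * β ^ 5 - 4 * β ^ 3 + 8 * β ^ 2 - 8 * β + 64) / 64)
    (hu₃ : algebraMap (𝓞 K) K u₃.val =
      (β ^ 7 - 2 * β ^ 5 + 4 * β ^ 4 - 4 * β ^ 3 - 32 * β ^ 2 + 8 * β - 16) / 64)
    (p : ℕ) [Fact p.Prime] (r : ℤ) (hroot : (p : ℤ) ∣ r ^ 8 + 240)
    (hsimple : ¬ (p : ℤ) ∣ 8 * r ^ 7) :
    ∃ χ : (𝓞 K)ˣ →* ℤˣ, (χ (-1) : ℤ) = legendreSym p (-1) ∧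
      (χ u₁ : ℤ) = legendreSym p (r ^ 6 + 2 * r ^ 4 - 4 * r ^ 2 - 56) ∧
      (χ u₂ : ℤ) =
        legendreSym p (r ^ 7 - 2 * r ^ 6 + 2 * r ^ 5 - 4 * r ^ 3 + 8 * r ^ 2 - 8 * r + 64) ∧
      (χ u₃ : ℤ) =
        legendreSym p (r ^ 7 - 2 * r ^ 5 + 4 * r ^ 4 - 4 * r ^ 3 - 32 * r ^ 2 + 8 * r - 16) := by
  obtain ⟨ψ, hψ⟩ := RingOfIntegers.exists_ringHom_zmod_apply_eq hgen
    (minpoly_eq_of_pow_eight_eq hβ) (r := r) (by simpa using hroot) (by simpa using hsimple)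
  let b : 𝓞 K := ⟨β, X ^ 8 + 240, by monicity!, by simp [hβ]⟩
  have hbβ : (b : K) = β := rfl
  have hb : ψ b = r := hψ b hbβ
  have h8 : ψ 8 ≠ 0 := fun h ↦ hsimple <| (ZMod.intCast_zmod_eq_zero_iff_dvd _ p).mp <| by
    rw [map_ofNat] at h
    push_cast
    rw [h, zero_mul]
  have h4 : ψ 4 ≠ 0 := fun h ↦ h8 <| by
    rw [show (8 : 𝓞 K) = 2 * 4 by norm_num, map_mul, h, mul_zero]
  have rel₁ : (4 : 𝓞 K) ^ 2 * u₁ = b ^ 6 + 2 * b ^ 4 - 4 * b ^ 2 - 56 :=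
    RingOfIntegers.eq_iff.mp (by
      simp only [map_mul, map_pow, map_sub, map_add, map_ofNat, hu₁, hbβ]; ring)
  have rel₂ : (8 : 𝓞 K) ^ 2 * u₂ =
      b ^ 7 - 2 * b ^ 6 + 2 * b ^ 5 - 4 * b ^ 3 + 8 * b ^ 2 - 8 * b + 64 :=
    RingOfIntegers.eq_iff.mp (by
      simp only [map_mul, map_pow, map_sub, map_add, map_ofNat, hu₂, hbβ]; ring)
  have rel₃ : (8 : 𝓞 K) ^ 2 * u₃ =
      b ^ 7 - 2 * b ^ 5 + 4 * b ^ 4 - 4 * b ^ 3 - 32 * b ^ 2 + 8 * b - 16 :=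
    RingOfIntegers.eq_iff.mp (by
      simp only [map_mul, map_pow, map_sub, map_add, map_ofNat, hu₃, hbβ]; ring)
  refine ⟨(quadraticChar (ZMod p)).toUnitHom.comp (Units.map ψ), ?_, ?_, ?_, ?_⟩ <;>
    simp only [MonoidHom.coe_comp, Function.comp_apply, MulChar.coe_toUnitHom, Units.coe_map,
      MonoidHom.coe_coe]
  · simp [legendreSym]
  · rw [quadraticChar_map_eq_of_sq_mul_eq ψ h4 rel₁]
    simp [legendreSym, hb, map_ofNat]
  · rw [quadraticChar_map_eq_of_sq_mul_eq ψ h8 rel₂]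
    simp [legendreSym, hb, map_ofNat]
  · rw [quadraticChar_map_eq_of_sq_mul_eq ψ h8 rel₃]
    simp [legendreSym, hb, map_ofNat]

end

/-- For `K' = ℚ(β)` with `β⁸ = -240` and `U₀'` the subgroup of the unit group
`U' = 𝓞_{K'}ˣ` generated by `-1` and the three listed units, one has
`U₀' ∩ (U')² = (U₀')²`: an element of `U₀'` is the square of a unit of `𝓞_{K'}`
if and only if it is the square of an element of `U₀'`. -/
theorem inter_squares_eq_squares
    (K' : Type*) [Field K'] [NumberField K']
    (β : K') (hβ : β ^ 8 = -240) (hgen : Algebra.adjoin ℚ {β} = ⊤)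
    (u₁ u₂ u₃ : (𝓞 K')ˣ)
    (hu₁ : algebraMap (𝓞 K') K' u₁.val =
      (β ^ 6 + 2 * β ^ 4 - 4 * β ^ 2 - 56) / 16)
    (hu₂ : algebraMap (𝓞 K') K' u₂.val =
      (β ^ 7 - 2 * β ^ 6 + 2 * β ^ 5 - 4 * β ^ 3 + 8 * β ^ 2 - 8 * β + 64) / 64)
    (hu₃ : algebraMap (𝓞 K') K' u₃.val =
      (β ^ 7 - 2 * β ^ 5 + 4 * β ^ 4 - 4 * β ^ 3 - 32 * β ^ 2 + 8 * β - 16) / 64) :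
    {x : (𝓞 K')ˣ | x ∈ Subgroup.closure {-1, u₁, u₂, u₃} ∧ ∃ y : (𝓞 K')ˣ, y ^ 2 = x} =
      {x : (𝓞 K')ˣ | ∃ y ∈ Subgroup.closure {-1, u₁, u₂, u₃}, y ^ 2 = x} := by
  have : Fact (Nat.Prime 19) := ⟨by norm_num⟩
  have : Fact (Nat.Prime 23) := ⟨by norm_num⟩
  have : Fact (Nat.Prime 31) := ⟨by norm_num⟩
  have : Fact (Nat.Prime 47) := ⟨by norm_num⟩
  have hχ := exists_quadraticChar_units hβ hgen hu₁ hu₂ hu₃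
  obtain ⟨χ₁, h₁⟩ := hχ 19 8 (by norm_num) (by norm_num)
  obtain ⟨χ₂, h₂⟩ := hχ 23 9 (by norm_num) (by norm_num)
  obtain ⟨χ₃, h₃⟩ := hχ 31 2 (by norm_num) (by norm_num)
  obtain ⟨χ₄, h₄⟩ := hχ 47 16 (by norm_num) (by norm_num)
  norm_num at h₁ h₂ h₃ h₄
  have table : ∀ k i : Fin 4, ![χ₁, χ₂, χ₃, χ₄] k (![-1, u₁, u₂, u₃] i) =
      ![![-1, -1, -1, -1], ![-1, 1, -1, -1], ![-1, -1, 1, -1], ![-1, -1, -1, 1]] k i := by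
    intro k i
    fin_cases k <;> fin_cases i <;> simp [h₁, h₂, h₃, h₄]
  have hsep := eq_empty_of_isSquare_prod_of_monoidHom_intUnits
    (g := ![-1, u₁, u₂, u₃]) ![χ₁, χ₂, χ₃, χ₄] (by simp only [table]; decide)
  have hrange : Set.range ![-1, u₁, u₂, u₃] = {-1, u₁, u₂, u₃} := by
    simp only [Matrix.range_cons, Matrix.range_empty, Set.union_empty, Set.singleton_union]
  rw [← hrange]
  exact Subgroup.closure_range_inter_squares_eq_squares hsep
end

section
/- For every integer a and every odd prime p, the ℚ_p-algebras ℚ_p[X]/(X⁸ − a) and ℚ_p[X]/(X⁸ − 16a) are isomorphic. -/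
/-!
For odd `p`, `16` is an eighth power `c ^ 8` in `ℚ_p`, and then `X ↦ X / c` identifies the two
algebras. Indeed one of `2`, `-2`, `-1` is a square mod `p`, so `16` is an eighth power mod `p`;
as `8` is a unit in `ℤ_p`, Hensel's lemma lifts this eighth root to `ℤ_p`.
-/

open Polynomial

universe u

theorem FiniteField.isSquare_or_isSquare_or_isSquare_mul {F : Type*} [Field F] [Fintype F]
    (a b : F) : IsSquare a ∨ IsSquare b ∨ IsSquare (a * b) := by
  classical
  by_contra! h
  obtain ⟨ha, hb, hab⟩ := h
  have ha0 : a ≠ 0 := fun h ↦ ha (h ▸ IsSquare.zero)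
  have hb0 : b ≠ 0 := fun h ↦ hb (h ▸ IsSquare.zero)
  refine hab ((quadraticChar_one_iff_isSquare (mul_ne_zero ha0 hb0)).mp ?_)
  rw [map_mul, quadraticChar_neg_one_iff_not_isSquare.mpr ha,
    quadraticChar_neg_one_iff_not_isSquare.mpr hb]
  norm_num

theorem FiniteField.exists_pow_eight_eq_sixteen (F : Type*) [Field F] [Fintype F] :
    ∃ x : F, x ^ 8 = 16 := by
  rcases isSquare_or_isSquare_or_isSquare_mul (2 : F) (-1) with ⟨t, ht⟩ | ⟨t, ht⟩ | ⟨t, ht⟩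
  · exact ⟨t, by linear_combination (t ^ 6 + 2 * t ^ 4 + 4 * t ^ 2 + 8) * ht.symm⟩
  -- `t ^ 2 = -1` gives `(1 + t) ^ 2 = 2 * t`
  · exact ⟨1 + t, by
      linear_combination
        (((1 + t) ^ 2 + 2 * t) * ((1 + t) ^ 4 + 4 * t ^ 2) + 16 * (t ^ 2 - 1)) * ht.symm⟩
  · exact ⟨t, by linear_combination (t ^ 6 - 2 * t ^ 4 + 4 * t ^ 2 - 8) * ht.symm⟩

theorem HenselianLocalRing.of_henselianRing_maximalIdeal (R : Type*) [CommRing R] [IsLocalRing R]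
    [HenselianRing R (IsLocalRing.maximalIdeal R)] : HenselianLocalRing R where
  is_henselian f hf a₀ h₁ h₂ := HenselianRing.is_henselian f hf a₀ h₁ (h₂.map _)

theorem HenselianLocalRing.exists_pow_eq {R : Type u} [CommRing R] [HenselianLocalRing R]
    {K : Type u} [Field K] (φ : R →+* K) (hφ : Function.Surjective φ) {n : ℕ} (hn : (n : K) ≠ 0)
    {u : R} {x : K} (hx0 : x ≠ 0) (hx : x ^ n = φ u) : ∃ y : R, y ^ n = u := by
  have hn0 : n ≠ 0 := by rintro rfl; exact hn Nat.cast_zero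
  have hensel := ((HenselianLocalRing.TFAE R).out 0 2).mp ‹_›
  obtain ⟨y, hy, -⟩ := hensel φ hφ (X ^ n - C u) (monic_X_pow_sub_C u hn0) x (by simp [hx])
    (by simp [derivative_X_pow, hn, hx0])
  exact ⟨y, sub_eq_zero.mp (by simpa using hy)⟩

instance (p : ℕ) [Fact p.Prime] : HenselianLocalRing ℤ_[p] :=
  .of_henselianRing_maximalIdeal _

theorem Padic.exists_pow_eight_eq_sixteen (p : ℕ) [Fact p.Prime] (hp : p ≠ 2) :
    ∃ c : ℚ_[p], c ^ 8 = 16 := by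
  have h2 : (2 : ZMod p) ≠ 0 := Ring.two_ne_zero (by rwa [ZMod.ringChar_zmod_n])
  obtain ⟨x, hx⟩ := FiniteField.exists_pow_eight_eq_sixteen (ZMod p)
  have hx0 : x ≠ 0 := by
    rintro rfl
    exact pow_ne_zero 4 h2 (by linear_combination -hx)
  have h8 : ((8 : ℕ) : ZMod p) ≠ 0 := by
    rw [show ((8 : ℕ) : ZMod p) = 2 ^ 3 by norm_num]
    exact pow_ne_zero 3 h2
  obtain ⟨y, hy⟩ := HenselianLocalRing.exists_pow_eq PadicInt.toZMod
    (ZMod.ringHom_surjective _) (u := 16) h8 hx0 (by rwa [map_ofNat])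
  exact ⟨y, by exact_mod_cast congrArg ((↑) : ℤ_[p] → ℚ_[p]) hy⟩

namespace AdjoinRoot

variable {R : Type*} [CommRing R] (n : ℕ) (b : R)

theorem root_X_pow_sub_C_pow : root (X ^ n - C b) ^ n = algebraMap R _ b := by
  have h := aeval_eq (f := X ^ n - C b) (X ^ n - C b)
  rwa [mk_self, map_sub, map_pow, aeval_X, aeval_C, sub_eq_zero] at h

noncomputable def liftOfPowEq {S : Type*} [CommRing S] [Algebra R S] (y : S)
    (hy : y ^ n = algebraMap R S b) : AdjoinRoot (X ^ n - C b) →ₐ[R] S :=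
  liftAlgHom _ (Algebra.ofId R S) y (by simp [hy])

@[simp]
theorem liftOfPowEq_root {S : Type*} [CommRing S] [Algebra R S] (y : S)
    (hy : y ^ n = algebraMap R S b) : liftOfPowEq n b y hy (root _) = y :=
  liftAlgHom_root ..

noncomputable def scaleRootEquiv (c : Rˣ) :
    AdjoinRoot (X ^ n - C b) ≃ₐ[R] AdjoinRoot (X ^ n - C (c ^ n * b : R)) :=
  AlgEquiv.ofAlgHom
    (liftOfPowEq n b (algebraMap R _ ↑c⁻¹ * root _) (by
      rw [mul_pow, root_X_pow_sub_C_pow, ← map_pow, ← map_mul, ← mul_assoc, ← mul_pow,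
        Units.inv_mul, one_pow, one_mul]))
    (liftOfPowEq n _ (algebraMap R _ ↑c * root _) (by
      rw [mul_pow, root_X_pow_sub_C_pow, ← map_pow, ← map_mul]))
    (algHom_ext (by
      rw [AlgHom.comp_apply, liftOfPowEq_root, map_mul (liftOfPowEq _ _ _ _), AlgHom.commutes,
        liftOfPowEq_root, ← mul_assoc, ← map_mul, Units.mul_inv, map_one, one_mul,
        AlgHom.id_apply]))
    (algHom_ext (by
      rw [AlgHom.comp_apply, liftOfPowEq_root, map_mul (liftOfPowEq _ _ _ _), AlgHom.commutes,
        liftOfPowEq_root, ← mul_assoc, ← map_mul, Units.inv_mul, map_one, one_mul,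
        AlgHom.id_apply]))

end AdjoinRoot

/-- For every integer `a` and every odd prime `p`, the `ℚ_p`-algebras
`ℚ_p[X]/(X⁸ - a)` and `ℚ_p[X]/(X⁸ - 16a)` are isomorphic. -/
theorem padic_algebras_isomorphic (a : ℤ) (p : ℕ) [Fact p.Prime] (hp : p ≠ 2) :
    Nonempty (AdjoinRoot (X ^ 8 - C (a : ℚ_[p])) ≃ₐ[ℚ_[p]]
      AdjoinRoot (X ^ 8 - C ((16 * a : ℤ) : ℚ_[p]))) := by
  obtain ⟨c, hc⟩ := Padic.exists_pow_eight_eq_sixteen p hp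
  have hc0 : c ≠ 0 := by
    rintro rfl
    norm_num at hc
  have h16 : ((16 * a : ℤ) : ℚ_[p]) = (Units.mk0 c hc0 : ℚ_[p]) ^ 8 * a := by
    simp [hc]
  rw [h16]
  exact ⟨AdjoinRoot.scaleRootEquiv 8 _ _⟩
end

section
/- For every integer a with a ≡ −1 (mod 32), the ℚ₂-algebras ℚ₂[X]/(X⁸ − a) and ℚ₂[X]/(X⁸ − 16a) are isomorphic. -/
/-!
Since `-a ≡ 1 (mod 32)`, Hensel's lemma makes `-a = s⁸` an eighth power in `ℚ₂`, and the
substitution `X ↦ s X` reduces the two algebras to `ℚ₂[X]/(X⁸ + 1)` and `ℚ₂[X]/(X⁸ + 16)`.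
If `x⁸ = -1`, then `x²` is a primitive eighth root of unity, so `√2 = x² - x⁶` and
`y = √2 x = x³ - x⁷` satisfies `y⁸ = -16`; conversely `x = (4 y³ - y⁷) / 16`.
-/

open Polynomial

theorem pow_eight_eq_neg_one_and_eq_iff {A : Type*} [CommRing A] {x y k : A} (hk : 16 * k = 1) :
    x ^ 8 = -1 ∧ y = x ^ 3 - x ^ 7 ↔ y ^ 8 = -16 ∧ x = k * (4 * y ^ 3 - y ^ 7) := by
  constructor
  · rintro ⟨hx, hy⟩
    have hy2 : y ^ 2 = 2 * x ^ 2 := by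
      rw [hy]
      linear_combination (x ^ 6 - 2 * x ^ 2) * hx
    have h16 : 4 * y ^ 3 - y ^ 7 = 16 * x :=
      calc 4 * y ^ 3 - y ^ 7 = y * (4 * y ^ 2 - (y ^ 2) ^ 3) := by ring
        _ = (x ^ 3 - x ^ 7) * (4 * (2 * x ^ 2) - (2 * x ^ 2) ^ 3) := by rw [hy2, hy]
        _ = 16 * x := by linear_combination (8 * x ^ 5 - 16 * x) * hx
    refine ⟨?_, ?_⟩
    · rw [show 8 = 2 * 4 from rfl, pow_mul, hy2]
      linear_combination 16 * hx
    · rw [h16]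
      linear_combination (-x) * hk
  · rintro ⟨hy, hx⟩
    have hx2 : x ^ 2 = 8 * k * y ^ 2 := by
      rw [hx]
      linear_combination (k ^ 2 * y ^ 6 - 8 * k ^ 2 * y ^ 2) * hy + 8 * k * y ^ 2 * hk
    have h256 : 256 * k ^ 2 = 1 := by linear_combination (16 * k + 1) * hk
    refine ⟨?_, ?_⟩
    · rw [show 8 = 2 * 4 from rfl, pow_mul, hx2]
      linear_combination 4096 * k ^ 4 * hy - (256 * k ^ 2 + 1) * h256
    · symm
      calc x ^ 3 - x ^ 7 = x * (x ^ 2 - (x ^ 2) ^ 3) := by ring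
        _ = k * (4 * y ^ 3 - y ^ 7) * (8 * k * y ^ 2 - (8 * k * y ^ 2) ^ 3) := by rw [hx2, hx]
        _ = y := by
          linear_combination (512 * k ^ 4 * y ^ 5 - 8 * k ^ 2 * y - 2048 * k ^ 4 * y) * hy
            + (y * (128 * k ^ 2 + 1) - 32 * k ^ 2 * y ^ 5) * h256

theorem Polynomial.aeval_X_pow_sub_C_eq_zero_iff {R A : Type*} [CommRing R] [CommRing A]
    [Algebra R A] {n : ℕ} {c : R} {z : A} :
    aeval z (X ^ n - C c) = 0 ↔ z ^ n = algebraMap R A c := by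
  simp [sub_eq_zero]

noncomputable section

namespace AdjoinRoot

variable {R : Type*} [CommRing R]

def algEquivOfRoots {f g : R[X]} (x : AdjoinRoot g) (hx : aeval x f = 0) (y : AdjoinRoot f)
    (hy : aeval y g = 0)
    (hyx : ∀ φ : AdjoinRoot g →ₐ[R] AdjoinRoot f, φ (root g) = y → φ x = root f)
    (hxy : ∀ ψ : AdjoinRoot f →ₐ[R] AdjoinRoot g, ψ (root f) = x → ψ y = root g) :
    AdjoinRoot f ≃ₐ[R] AdjoinRoot g :=
  AlgEquiv.ofAlgHom (liftAlgHom f _ x hx) (liftAlgHom g _ y hy)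
    (algHom_ext <| congrArg (liftAlgHom f _ x hx) (liftAlgHom_root g _ y hy) |>.trans <|
      hxy _ (liftAlgHom_root f _ x hx))
    (algHom_ext <| congrArg (liftAlgHom g _ y hy) (liftAlgHom_root f _ x hx) |>.trans <|
      hyx _ (liftAlgHom_root g _ y hy))

theorem root_pow_eq_algebraMap (n : ℕ) (c : R) :
    root (X ^ n - C c) ^ n = algebraMap R _ c := by
  rw [← aeval_X_pow_sub_C_eq_zero_iff, aeval_eq, mk_self]

def algEquivPowMul (n : ℕ) (t : Rˣ) (c : R) :
    AdjoinRoot (X ^ n - C ((t : R) ^ n * c)) ≃ₐ[R] AdjoinRoot (X ^ n - C c) :=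
  algEquivOfRoots ((t : R) • root _)
    (by rw [aeval_X_pow_sub_C_eq_zero_iff, _root_.smul_pow, root_pow_eq_algebraMap, Algebra.smul_def,
      ← map_mul])
    ((↑t⁻¹ : R) • root _)
    (by rw [aeval_X_pow_sub_C_eq_zero_iff, _root_.smul_pow, root_pow_eq_algebraMap, Algebra.smul_def,
      ← map_mul, ← mul_assoc, ← mul_pow, Units.inv_mul, one_pow, one_mul])
    (fun φ hφ => by rw [map_smul, hφ, smul_smul, Units.mul_inv, one_smul])
    (fun ψ hψ => by rw [map_smul, hψ, smul_smul, Units.inv_mul, one_smul])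

theorem sixteen_mul_algebraMap_invOf_two_pow_four [Invertible (2 : R)] (A : Type*) [CommRing A]
    [Algebra R A] : 16 * algebraMap R A (⅟2) ^ 4 = 1 := by
  rw [show (16 : A) = 2 ^ 4 by norm_num, ← mul_pow, ← map_ofNat (algebraMap R A) 2, ← map_mul,
    mul_invOf_self, map_one, one_pow]

def algEquivNegOneNegSixteen [Invertible (2 : R)] :
    AdjoinRoot (X ^ 8 - C (-1 : R)) ≃ₐ[R] AdjoinRoot (X ^ 8 - C (-16 : R)) :=
  have hf := (pow_eight_eq_neg_one_and_eq_iff (sixteen_mul_algebraMap_invOf_two_pow_four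
    (AdjoinRoot (X ^ 8 - C (-1 : R))))).mp
      ⟨by rw [root_pow_eq_algebraMap, map_neg (algebraMap R _), map_one (algebraMap R _)], rfl⟩
  have hg := (pow_eight_eq_neg_one_and_eq_iff (sixteen_mul_algebraMap_invOf_two_pow_four
    (AdjoinRoot (X ^ 8 - C (-16 : R))))).mpr
      ⟨by rw [root_pow_eq_algebraMap, map_neg (algebraMap R _), map_ofNat (algebraMap R _)], rfl⟩
  algEquivOfRoots (algebraMap R _ (⅟2) ^ 4 * (4 * root _ ^ 3 - root _ ^ 7))
    (by rw [aeval_X_pow_sub_C_eq_zero_iff, map_neg (algebraMap R _), map_one (algebraMap R _), hg.1])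
    (root _ ^ 3 - root _ ^ 7)
    (by rw [aeval_X_pow_sub_C_eq_zero_iff, map_neg (algebraMap R _), map_ofNat (algebraMap R _),
      hf.1])
    (fun φ hφ => by
      simp only [map_mul, map_sub, map_pow, map_ofNat, AlgHom.commutes, hφ]
      exact hf.2.symm)
    (fun ψ hψ => by
      simp only [map_sub, map_pow, hψ]
      exact hg.2.symm)

end AdjoinRoot

end

theorem PadicInt.exists_pow_eq_of_modEq {p : ℕ} [Fact p.Prime] {k : ℕ} {b c : ℤ}
    (hb : IsCoprime b p) (h : b ^ p ^ k ≡ c [ZMOD p ^ (2 * k + 1)]) :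
    ∃ w : ℤ_[p], w ^ p ^ k = c := by
  set F : ℤ_[p][X] := X ^ p ^ k - C (c : ℤ_[p])
  have hp : (1 : ℝ) < p := Nat.one_lt_cast.mpr (Fact.out : p.Prime).one_lt
  have hF : ‖F.aeval (b : ℤ_[p])‖ ≤ (p : ℝ) ^ (-(2 * k + 1 : ℕ) : ℤ) := by
    have : F.aeval (b : ℤ_[p]) = ((b ^ p ^ k - c : ℤ) : ℤ_[p]) := by simp [F]
    rw [this, PadicInt.norm_int_le_pow_iff_dvd]
    exact_mod_cast h.symm.dvd
  have hF' : ‖F.derivative.aeval (b : ℤ_[p])‖ = (p : ℝ) ^ (-k : ℤ) := by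
    have hb1 : ‖(b : ℤ_[p])‖ = 1 := PadicInt.norm_intCast_eq_one_iff.mpr hb
    simp [F, derivative_X_pow, hb1]
  obtain ⟨w, hw, -⟩ := hensels_lemma (F := F) (a := b) <| by
    refine hF.trans_lt ?_
    rw [hF', ← zpow_natCast, ← zpow_mul]
    exact zpow_lt_zpow_right₀ hp (by push_cast; omega)
  exact ⟨w, by simpa [F, sub_eq_zero] using hw⟩

theorem Int.exists_odd_pow_eight_modEq {c : ℤ} (hc : c ≡ 1 [ZMOD 32]) :
    ∃ b : ℤ, Odd b ∧ b ^ 8 ≡ c [ZMOD 128] := by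
  have : c % 128 = 1 ∨ c % 128 = 33 ∨ c % 128 = 65 ∨ c % 128 = 97 := by
    unfold Int.ModEq at hc
    omega
  rcases this with h | h | h | h
  · exact ⟨1, by decide, by rw [Int.ModEq, h]; rfl⟩
  · exact ⟨3, by decide, by rw [Int.ModEq, h]; rfl⟩
  · exact ⟨7, by decide, by rw [Int.ModEq, h]; rfl⟩
  · exact ⟨5, by decide, by rw [Int.ModEq, h]; rfl⟩

theorem Padic.exists_pow_eight_eq_of_modEq_one {c : ℤ} (hc : c ≡ 1 [ZMOD 32]) :
    ∃ s : ℚ_[2], s ^ 8 = c := by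
  obtain ⟨b, hb, hbc⟩ := Int.exists_odd_pow_eight_modEq hc
  obtain ⟨w, hw⟩ := PadicInt.exists_pow_eq_of_modEq (p := 2) (k := 3)
    (Int.isCoprime_two_right.mpr hb) hbc
  exact ⟨w, by exact_mod_cast congrArg ((↑) : ℤ_[2] → ℚ_[2]) hw⟩

/-- For every integer `a ≡ -1 (mod 32)`, the `ℚ₂`-algebras `ℚ₂[X]/(X⁸ - a)` and
`ℚ₂[X]/(X⁸ - 16a)` are isomorphic. -/
theorem padic2_algebras_isomorphic (a : ℤ) (ha : a ≡ -1 [ZMOD 32]) :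
    Nonempty (AdjoinRoot (X ^ 8 - C (a : ℚ_[2])) ≃ₐ[ℚ_[2]]
      AdjoinRoot (X ^ 8 - C ((16 * a : ℤ) : ℚ_[2]))) := by
  obtain ⟨s, hs⟩ := Padic.exists_pow_eight_eq_of_modEq_one (c := -a) (by simpa using ha.neg)
  have hs0 : s ≠ 0 := by
    rintro rfl
    obtain rfl : a = 0 := by simpa [eq_comm] using hs
    exact absurd ha (by decide)
  set t := Units.mk0 s hs0
  have ha' : (a : ℚ_[2]) = (t : ℚ_[2]) ^ 8 * -1 := by
    rw [Units.val_mk0, hs]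
    push_cast
    ring
  have h16a : ((16 * a : ℤ) : ℚ_[2]) = (t : ℚ_[2]) ^ 8 * -16 := by
    rw [Units.val_mk0, hs]
    push_cast
    ring
  rw [ha', h16a]
  exact ⟨(AdjoinRoot.algEquivPowMul 8 t (-1)).trans
    (AdjoinRoot.algEquivNegOneNegSixteen.trans (AdjoinRoot.algEquivPowMul 8 t (-16)).symm)⟩
end
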